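/- arXiv:1906.03313 — 6 statements merged into one kernel-verified Lean document; each statement's English description precedes it below -/
import Mathlib

section
/- There does not exist a non-geodesic Legendre curve γ of osculating order 2 in a contact metric manifold whose mean curvature vector field H is C-parallel, i.e., satisfies ∇_T H = λξ for a nowhere-zero function λ along γ. -/
/-!
Differentiating `∇_T T = k₁ υ₂` once more with the Frenet equations gives
`∇_T H = k₁' υ₂ - k₁² T`. If this equals `λ ξ`, pairing with `T` kills both `υ₂` and `ξ`
(the curve is Legendre), leaving `k₁² = 0`, which contradicts `k₁ > 0`.
-/

open Real RealInnerProductSpace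

theorem smul_eq_zero_of_add_smul_eq_smul_of_orthogonal
    {E : Type*} [NormedAddCommGroup E] [InnerProductSpace ℝ E]
    {T v ξ : E} {a b c : ℝ} (hTv : ⟪T, v⟫ = 0) (hTξ : ⟪T, ξ⟫ = 0)
    (h : a • v + b • T = c • ξ) : b • T = 0 := by
  have hpair := congrArg (⟪T, ·⟫) h
  simp only [inner_add_right, real_inner_smul_right, hTv, hTξ, mul_zero, zero_add] at hpair
  rcases mul_eq_zero.mp hpair with hb | hT
  · simp [hb]
  · simp [inner_self_eq_zero.mp hT]

theorem frenet_deriv_deriv_tangent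
    {E : Type*} [NormedAddCommGroup E] [InnerProductSpace ℝ E]
    (D : (ℝ → E) → (ℝ → E))
    (hDsmul : ∀ (f : ℝ → ℝ) (V : ℝ → E), ContDiff ℝ (⊤ : ℕ∞) f → ContDiff ℝ (⊤ : ℕ∞) V →
      D (fun s => f s • V s) = fun s => deriv f s • V s + f s • D V s)
    {T v2 : ℝ → E} {k1 : ℝ → ℝ}
    (hv2s : ContDiff ℝ (⊤ : ℕ∞) v2) (hk1s : ContDiff ℝ (⊤ : ℕ∞) k1)
    (hF1 : D T = fun s => k1 s • v2 s)
    (hF2 : D v2 = fun s => -(k1 s) • T s) (s : ℝ) :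
    D (D T) s = deriv k1 s • v2 s + (-(k1 s * k1 s)) • T s := by
  rw [hF1, hDsmul k1 v2 hk1s hv2s, hF2]
  simp only [smul_smul, mul_neg]

theorem stmt_5_general
    {E : Type*} [NormedAddCommGroup E] [InnerProductSpace ℝ E]
    (D : (ℝ → E) → (ℝ → E))
    (hDsmul : ∀ (f : ℝ → ℝ) (V : ℝ → E), ContDiff ℝ (⊤ : ℕ∞) f → ContDiff ℝ (⊤ : ℕ∞) V →
      D (fun s => f s • V s) = fun s => deriv f s • V s + f s • D V s)
    (T v2 : ℝ → E) (k1 : ℝ → ℝ)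
    (hv2s : ContDiff ℝ (⊤ : ℕ∞) v2) (hk1s : ContDiff ℝ (⊤ : ℕ∞) k1)
    (hTT : ∀ s : ℝ, ⟪T s, T s⟫ = 1)
    (hTv2 : ∀ s : ℝ, ⟪T s, v2 s⟫ = 0)
    (hk1pos : ∀ s : ℝ, 0 < k1 s)
    (hF1 : D T = fun s => k1 s • v2 s)
    (hF2 : D v2 = fun s => -(k1 s) • T s)
    (ξ : ℝ → E)
    (hLeg : ∀ s : ℝ, ⟪T s, ξ s⟫ = 0)
    (lam : ℝ → ℝ)
    (hC : ∀ s : ℝ, D (D T) s = lam s • ξ s)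
    :
    False := by
  have hT : T 0 ≠ 0 := fun h => by simpa [h] using hTT 0
  have hsecond := frenet_deriv_deriv_tangent D hDsmul hv2s hk1s hF1 hF2 0
  rw [hC] at hsecond
  have htangential :=
    smul_eq_zero_of_add_smul_eq_smul_of_orthogonal (hTv2 0) (hLeg 0) hsecond.symm
  have hk1 : k1 0 * k1 0 = 0 := by simpa [hT] using htangential
  exact (mul_self_pos.mpr (hk1pos 0).ne').ne' hk1

theorem stmt_5
    {E : Type*} [NormedAddCommGroup E] [InnerProductSpace ℝ E]
    (D : (ℝ → E) → (ℝ → E))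
    (hDadd : ∀ V W : ℝ → E, ContDiff ℝ (⊤ : ℕ∞) V → ContDiff ℝ (⊤ : ℕ∞) W →
      D (fun s => V s + W s) = fun s => D V s + D W s)
    (hDsmul : ∀ (f : ℝ → ℝ) (V : ℝ → E), ContDiff ℝ (⊤ : ℕ∞) f → ContDiff ℝ (⊤ : ℕ∞) V →
      D (fun s => f s • V s) = fun s => deriv f s • V s + f s • D V s)
    (hDmetric : ∀ V W : ℝ → E, ContDiff ℝ (⊤ : ℕ∞) V → ContDiff ℝ (⊤ : ℕ∞) W → ∀ s : ℝ,
      deriv (fun t => ⟪V t, W t⟫) s = ⟪D V s, W s⟫ + ⟪V s, D W s⟫)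
    (hDsmooth : ∀ V : ℝ → E, ContDiff ℝ (⊤ : ℕ∞) V → ContDiff ℝ (⊤ : ℕ∞) (D V))
    (T v2 : ℝ → E) (k1 : ℝ → ℝ)
    (hTs : ContDiff ℝ (⊤ : ℕ∞) T) (hv2s : ContDiff ℝ (⊤ : ℕ∞) v2) (hk1s : ContDiff ℝ (⊤ : ℕ∞) k1)
    (hTT : ∀ s : ℝ, ⟪T s, T s⟫ = 1) (hv2v2 : ∀ s : ℝ, ⟪v2 s, v2 s⟫ = 1)
    (hTv2 : ∀ s : ℝ, ⟪T s, v2 s⟫ = 0)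
    (hk1pos : ∀ s : ℝ, 0 < k1 s)
    (hF1 : D T = fun s => k1 s • v2 s)
    (hF2 : D v2 = fun s => -(k1 s) • T s)
    (ξ : ℝ → E) (φ A : ℝ → E →ₗ[ℝ] E)
    (hξs : ContDiff ℝ (⊤ : ℕ∞) ξ)
    (hξu : ∀ s : ℝ, ⟪ξ s, ξ s⟫ = 1)
    (hφa : ∀ (s : ℝ) (v w : E), ⟪φ s v, w⟫ = -⟪v, φ s w⟫)
    (hDξ : D ξ = fun s => -(φ s (T s)) - φ s (A s (T s)))
    (hLeg : ∀ s : ℝ, ⟪T s, ξ s⟫ = 0)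
    (lam : ℝ → ℝ) (hlam : ∀ s : ℝ, lam s ≠ 0)
    (hC : ∀ s : ℝ, D (D T) s = lam s • ξ s)
    :
    False :=
  stmt_5_general D hDsmul T v2 k1 hv2s hk1s hTT hTv2 hk1pos hF1 hF2 ξ hLeg lam hC
end

section
/- Let γ be a non-geodesic Legendre curve of osculating order 2 in a non-Sasakian contact metric manifold. Then γ has C-proper mean curvature vector field (ΔH = λξ with λ nowhere zero) if and only if k₁ = ±g(T, φhT) is constant, ξ = ±υ₂, and λ = g(T, φhT)³. -/
open Real RealInnerProductSpace

theorem stmt_10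
    {E : Type*} [NormedAddCommGroup E] [InnerProductSpace ℝ E]
    (D : (ℝ → E) → (ℝ → E))
    (hDadd : ∀ V W : ℝ → E, ContDiff ℝ (⊤ : ℕ∞) V → ContDiff ℝ (⊤ : ℕ∞) W →
      D (fun s => V s + W s) = fun s => D V s + D W s)
    (hDsmul : ∀ (f : ℝ → ℝ) (V : ℝ → E), ContDiff ℝ (⊤ : ℕ∞) f → ContDiff ℝ (⊤ : ℕ∞) V →
      D (fun s => f s • V s) = fun s => deriv f s • V s + f s • D V s)
    (hDmetric : ∀ V W : ℝ → E, ContDiff ℝ (⊤ : ℕ∞) V → ContDiff ℝ (⊤ : ℕ∞) W → ∀ s : ℝ,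
      deriv (fun t => ⟪V t, W t⟫) s = ⟪D V s, W s⟫ + ⟪V s, D W s⟫)
    (hDsmooth : ∀ V : ℝ → E, ContDiff ℝ (⊤ : ℕ∞) V → ContDiff ℝ (⊤ : ℕ∞) (D V))
    (T v2 : ℝ → E) (k1 : ℝ → ℝ)
    (hTs : ContDiff ℝ (⊤ : ℕ∞) T) (hv2s : ContDiff ℝ (⊤ : ℕ∞) v2) (hk1s : ContDiff ℝ (⊤ : ℕ∞) k1)
    (hTT : ∀ s : ℝ, ⟪T s, T s⟫ = 1) (hv2v2 : ∀ s : ℝ, ⟪v2 s, v2 s⟫ = 1)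
    (hTv2 : ∀ s : ℝ, ⟪T s, v2 s⟫ = 0)
    (hk1pos : ∀ s : ℝ, 0 < k1 s)
    (hF1 : D T = fun s => k1 s • v2 s)
    (hF2 : D v2 = fun s => -(k1 s) • T s)
    (ξ : ℝ → E) (φ A : ℝ → E →ₗ[ℝ] E)
    (hξs : ContDiff ℝ (⊤ : ℕ∞) ξ)
    (hξu : ∀ s : ℝ, ⟪ξ s, ξ s⟫ = 1)
    (hφa : ∀ (s : ℝ) (v w : E), ⟪φ s v, w⟫ = -⟪v, φ s w⟫)
    (hDξ : D ξ = fun s => -(φ s (T s)) - φ s (A s (T s)))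
    (hLeg : ∀ s : ℝ, ⟪T s, ξ s⟫ = 0)
    (hNS : A ≠ 0)
    (lam : ℝ → ℝ) (hlam : ∀ s : ℝ, lam s ≠ 0)
    :
    (∀ s : ℝ, -D (D (D T)) s = lam s • ξ s) ↔
      (∃ ε : ℝ, (ε = 1 ∨ ε = -1) ∧
        (∀ s : ℝ, k1 s = ε * ⟪T s, φ s (A s (T s))⟫) ∧
        (∀ s t : ℝ, k1 s = k1 t) ∧
        (∀ s : ℝ, ξ s = ε • v2 s) ∧
        (∀ s : ℝ, lam s = ⟪T s, φ s (A s (T s))⟫^3)) := by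
  classical
  have hk1diff : Differentiable ℝ k1 := (contDiff_infty_iff_deriv.mp hk1s).1
  have hk1d : ContDiff ℝ (⊤ : ℕ∞) (deriv k1) := (contDiff_infty_iff_deriv.mp hk1s).2
  -- second covariant derivative
  have hDDT : D (D T) = fun s => deriv k1 s • v2 s + (-(k1 s * k1 s)) • T s := by
    rw [hF1, hDsmul k1 v2 hk1s hv2s]
    funext s
    rw [hF2]
    simp only [smul_smul]
    congr 1
    ring_nf
  have hsm1 : ContDiff ℝ (⊤ : ℕ∞) (fun s => deriv k1 s • v2 s) := hk1d.smul hv2s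
  have hsm2 : ContDiff ℝ (⊤ : ℕ∞) (fun s => (-(k1 s * k1 s)) • T s) :=
    ((hk1s.mul hk1s).neg).smul hTs
  have hd2 : ∀ s, deriv (fun s => -(k1 s * k1 s)) s = -(2 * k1 s * deriv k1 s) := by
    intro s
    rw [deriv.fun_neg, deriv_fun_mul (hk1diff s) (hk1diff s)]
    ring
  -- third covariant derivative
  have key : ∀ s, -D (D (D T)) s
      = (3 * k1 s * deriv k1 s) • T s + (k1 s ^ 3 - deriv (deriv k1) s) • v2 s := by
    intro s
    rw [hDDT, hDadd _ _ hsm1 hsm2]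
    simp only [hDsmul _ _ hk1d hv2s, hDsmul _ _ ((hk1s.mul hk1s).neg) hTs, hF1, hF2, hd2]
    match_scalars <;> ring
  -- φ is antisymmetric hence ⟪T, φT⟫ = 0
  have hφ0 : ∀ s, ⟪T s, φ s (T s)⟫ = 0 := by
    intro s
    have h1 := hφa s (T s) (T s)
    rw [real_inner_comm] at h1
    linarith
  -- Legendre identity: k1 ⟪v2, ξ⟫ = ⟪T, φ(A T)⟫
  have hkey2 : ∀ s, k1 s * ⟪v2 s, ξ s⟫ = ⟪T s, φ s (A s (T s))⟫ := by
    intro s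
    have h0 : deriv (fun t => ⟪T t, ξ t⟫) s = 0 := by
      have he : (fun t => ⟪T t, ξ t⟫) = fun _ => (0 : ℝ) := funext hLeg
      rw [he, deriv_const]
    have h1 := hDmetric T ξ hTs hξs s
    rw [h0, hF1, hDξ] at h1
    simp only [inner_sub_right, inner_neg_right, real_inner_smul_left, hφ0 s] at h1
    linarith
  constructor
  · intro h
    -- first curvature is constant
    have hderiv0 : ∀ s, deriv k1 s = 0 := by
      intro s
      have heq : (3 * k1 s * deriv k1 s) • T s + (k1 s ^ 3 - deriv (deriv k1) s) • v2 s
          = lam s • ξ s := by rw [← key s, h s]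
      have hvT : ⟪v2 s, T s⟫ = 0 := by rw [real_inner_comm]; exact hTv2 s
      have hxT : ⟪ξ s, T s⟫ = 0 := by rw [real_inner_comm]; exact hLeg s
      have h2 := congrArg (fun v : E => ⟪v, T s⟫) heq
      simp only [inner_add_left, real_inner_smul_left, hTT s, hvT, hxT,
        mul_one, mul_zero, add_zero] at h2
      have hk := (hk1pos s).ne'
      rcases mul_eq_zero.mp h2 with h3 | h3
      · rcases mul_eq_zero.mp h3 with h4 | h4
        · norm_num at h4
        · exact absurd h4 hk
      · exact h3
    have hk1const : ∀ s t, k1 s = k1 t := fun s t =>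
      is_const_of_deriv_eq_zero hk1diff hderiv0 s t
    have hderiv2 : ∀ s, deriv (deriv k1) s = 0 := by
      have he : deriv k1 = fun _ => (0 : ℝ) := funext hderiv0
      intro s; rw [he, deriv_const]
    have heq2 : ∀ s, (k1 s ^ 3) • v2 s = lam s • ξ s := by
      intro s
      have := key s
      rw [h s, hderiv0 s, hderiv2 s] at this
      rw [this]
      match_scalars <;> ring
    set c : ℝ → ℝ := fun s => ⟪ξ s, v2 s⟫ with hc
    -- lam = k1³ c and c² = 1
    have hlamc : ∀ s, lam s = k1 s ^ 3 * c s := by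
      intro s
      have h2 := congrArg (fun v : E => ⟪v, ξ s⟫) (heq2 s)
      simp only [real_inner_smul_left, hξu s, mul_one] at h2
      rw [← h2, hc]
      rw [real_inner_comm]
    have hk1c : ∀ s, k1 s ^ 3 = lam s * c s := by
      intro s
      have h2 := congrArg (fun v : E => ⟪v, v2 s⟫) (heq2 s)
      simp only [real_inner_smul_left, hv2v2 s, mul_one] at h2
      rw [h2, hc]
    have hk3ne : ∀ s, k1 s ^ 3 ≠ 0 := fun s => pow_ne_zero _ (hk1pos s).ne'
    have hc2 : ∀ s, c s * c s = 1 := by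
      intro s
      have h1 := hk1c s
      rw [hlamc s] at h1
      have h4 : k1 s ^ 3 * (c s * c s) = k1 s ^ 3 * 1 := by
        rw [mul_one, ← mul_assoc]; exact h1.symm
      exact mul_left_cancel₀ (hk3ne s) h4
    have hpm : ∀ s, c s = 1 ∨ c s = -1 := fun s => mul_self_eq_one_iff.mp (hc2 s)
    have hccont : Continuous c := by
      exact (hξs.continuous).inner (hv2s.continuous)
    have hzero : ∀ s t, c s = 1 → c t = -1 → False := by
      intro s t hs ht
      have hsub := intermediate_value_uIcc (hccont.continuousOn : ContinuousOn c (Set.uIcc s t))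
      have h0 : (0 : ℝ) ∈ Set.uIcc (c s) (c t) := by
        rw [hs, ht, Set.mem_uIcc]; norm_num
      obtain ⟨u, _, hu⟩ := hsub h0
      rcases hpm u with h4 | h4 <;> rw [hu] at h4 <;> norm_num at h4
    have hcconst : ∀ s, c s = c 0 := by
      intro s
      rcases hpm s with hs | hs <;> rcases hpm 0 with h0 | h0
      · rw [hs, h0]
      · exact absurd (hzero s 0 hs h0) (not_false)
      · exact absurd (hzero 0 s h0 hs) (not_false)
      · rw [hs, h0]
    refine ⟨c 0, hpm 0, ?_, hk1const, ?_, ?_⟩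
    · intro s
      have h2 := hkey2 s
      have h3 : ⟪v2 s, ξ s⟫ = c s := real_inner_comm _ _
      rw [h3, hcconst s] at h2
      have h4 : c 0 * c 0 = 1 := by
        have := hc2 s; rw [hcconst s] at this; exact this
      calc k1 s = k1 s * (c 0 * c 0) := by rw [h4, mul_one]
        _ = c 0 * (k1 s * c 0) := by ring
        _ = c 0 * ⟪T s, φ s (A s (T s))⟫ := by rw [h2]
    · intro s
      -- ξ s = c 0 • v2 s
      have h2 := heq2 s
      rw [hlamc s, hcconst s] at h2
      have h3 : (k1 s ^ 3) • v2 s = (k1 s ^ 3) • ((c 0) • ξ s) := by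
        rw [h2, smul_smul]
      have h4 : v2 s = (c 0) • ξ s := smul_right_injective E (hk3ne s) h3
      have h5 : c 0 * c 0 = 1 := by
        have := hc2 s; rw [hcconst s] at this; exact this
      rw [h4, smul_smul, h5, one_smul]
    · intro s
      have h2 := hkey2 s
      have h3 : ⟪v2 s, ξ s⟫ = c s := real_inner_comm _ _
      rw [h3, hcconst s] at h2
      have h5 : c 0 * c 0 = 1 := by
        have := hc2 s; rw [hcconst s] at this; exact this
      have h6 : (k1 s * c 0) ^ 3 = k1 s ^ 3 * c 0 * (c 0 * c 0) := by ring
      rw [h5, mul_one] at h6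
      rw [hlamc s, hcconst s, ← h2, h6]
  · rintro ⟨ε, hε, hk1eq, hconst, hξeq, hlameq⟩
    intro s
    have hkf : k1 = fun _ => k1 0 := funext fun s => hconst s 0
    have hderiv0 : ∀ s, deriv k1 s = 0 := by
      intro s; rw [hkf, deriv_const]
    have hderiv2 : ∀ s, deriv (deriv k1) s = 0 := by
      have he : deriv k1 = fun _ => (0 : ℝ) := funext hderiv0
      intro s; rw [he, deriv_const]
    rw [key s, hderiv0 s, hderiv2 s, hξeq s, hlameq s]
    have hX : ⟪T s, φ s (A s (T s))⟫ = ε * k1 s := by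
      have := hk1eq s
      rcases hε with rfl | rfl <;> linarith
    rw [hX, smul_smul]
    rcases hε with rfl | rfl <;> match_scalars <;> ring
end

section
/- Let γ be a non-geodesic Legendre curve of osculating order 3 in a non-Sasakian contact metric manifold with C-proper mean curvature vector field: ΔH = λξ, λ nowhere zero. Then k₁ is constant, λ = k₁²(k₁² + k₂²)/g(T, φhT), ξ = (g(T,φhT)/k₁) υ₂ - (k₁k₂′/λ) υ₃, and η(υ₂)² + η(υ₃)² = 1. -/
open Real RealInnerProductSpace

set_option maxHeartbeats 1600000 in
theorem stmt_12
    {E : Type*} [NormedAddCommGroup E] [InnerProductSpace ℝ E]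
    (D : (ℝ → E) → (ℝ → E))
    (hDadd : ∀ V W : ℝ → E, ContDiff ℝ (⊤ : ℕ∞) V → ContDiff ℝ (⊤ : ℕ∞) W →
      D (fun s => V s + W s) = fun s => D V s + D W s)
    (hDsmul : ∀ (f : ℝ → ℝ) (V : ℝ → E), ContDiff ℝ (⊤ : ℕ∞) f → ContDiff ℝ (⊤ : ℕ∞) V →
      D (fun s => f s • V s) = fun s => deriv f s • V s + f s • D V s)
    (hDmetric : ∀ V W : ℝ → E, ContDiff ℝ (⊤ : ℕ∞) V → ContDiff ℝ (⊤ : ℕ∞) W → ∀ s : ℝ,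
      deriv (fun t => ⟪V t, W t⟫) s = ⟪D V s, W s⟫ + ⟪V s, D W s⟫)
    (hDsmooth : ∀ V : ℝ → E, ContDiff ℝ (⊤ : ℕ∞) V → ContDiff ℝ (⊤ : ℕ∞) (D V))
    (T v2 v3 : ℝ → E) (k1 k2 : ℝ → ℝ)
    (hTs : ContDiff ℝ (⊤ : ℕ∞) T) (hv2s : ContDiff ℝ (⊤ : ℕ∞) v2) (hv3s : ContDiff ℝ (⊤ : ℕ∞) v3)
    (hk1s : ContDiff ℝ (⊤ : ℕ∞) k1) (hk2s : ContDiff ℝ (⊤ : ℕ∞) k2)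
    (hTT : ∀ s : ℝ, ⟪T s, T s⟫ = 1) (hv2v2 : ∀ s : ℝ, ⟪v2 s, v2 s⟫ = 1)
    (hv3v3 : ∀ s : ℝ, ⟪v3 s, v3 s⟫ = 1)
    (hTv2 : ∀ s : ℝ, ⟪T s, v2 s⟫ = 0) (hTv3 : ∀ s : ℝ, ⟪T s, v3 s⟫ = 0)
    (hv2v3 : ∀ s : ℝ, ⟪v2 s, v3 s⟫ = 0)
    (hk1pos : ∀ s : ℝ, 0 < k1 s) (hk2pos : ∀ s : ℝ, 0 < k2 s)
    (hF1 : D T = fun s => k1 s • v2 s)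
    (hF2 : D v2 = fun s => -(k1 s) • T s + k2 s • v3 s)
    (hF3 : D v3 = fun s => -(k2 s) • v2 s)
    (ξ : ℝ → E) (φ A : ℝ → E →ₗ[ℝ] E)
    (hξs : ContDiff ℝ (⊤ : ℕ∞) ξ)
    (hξu : ∀ s : ℝ, ⟪ξ s, ξ s⟫ = 1)
    (hφa : ∀ (s : ℝ) (v w : E), ⟪φ s v, w⟫ = -⟪v, φ s w⟫)
    (hDξ : D ξ = fun s => -(φ s (T s)) - φ s (A s (T s)))
    (hLeg : ∀ s : ℝ, ⟪T s, ξ s⟫ = 0)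
    (hNS : A ≠ 0)
    (lam : ℝ → ℝ) (hlam : ∀ s : ℝ, lam s ≠ 0)
    (hC : ∀ s : ℝ, -D (D (D T)) s = lam s • ξ s)
    :
    (∀ s t : ℝ, k1 s = k1 t) ∧
      (∀ s : ℝ, lam s = (k1 s)^2 * ((k1 s)^2 + (k2 s)^2) / ⟪T s, φ s (A s (T s))⟫) ∧
      (∀ s : ℝ, ξ s = (⟪T s, φ s (A s (T s))⟫ / k1 s) • v2 s
        - (k1 s * deriv k2 s / lam s) • v3 s) ∧
      (∀ s : ℝ, ⟪v2 s, ξ s⟫^2 + ⟪v3 s, ξ s⟫^2 = 1) := by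

  have sk1' : ContDiff ℝ (⊤ : ℕ∞) (deriv k1) := (contDiff_infty_iff_deriv.mp hk1s).2
  have sDv2 : ContDiff ℝ (⊤ : ℕ∞) (D v2) := hDsmooth v2 hv2s
  have e1 : D (D T) = fun s => deriv k1 s • v2 s + k1 s • D v2 s := by
    rw [hF1]; exact hDsmul k1 v2 hk1s hv2s
  have sP : ContDiff ℝ (⊤ : ℕ∞) (fun s => deriv k1 s • v2 s) := sk1'.smul hv2s
  have sQ : ContDiff ℝ (⊤ : ℕ∞) (fun s => k1 s • D v2 s) := hk1s.smul sDv2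
  have e2 : D (D (D T)) = fun s =>
      D (fun s => deriv k1 s • v2 s) s + D (fun s => k1 s • D v2 s) s := by
    rw [e1]; exact hDadd _ _ sP sQ
  have e3 : D (fun s => deriv k1 s • v2 s)
      = fun s => deriv (deriv k1) s • v2 s + deriv k1 s • D v2 s :=
    hDsmul _ _ sk1' hv2s
  have e4 : D (fun s => k1 s • D v2 s)
      = fun s => deriv k1 s • D v2 s + k1 s • D (D v2) s :=
    hDsmul _ _ hk1s sDv2
  have e5 : D (D v2) = fun s =>
      ((-(deriv k1 s)) • T s + (-(k1 s)) • D T s) + (deriv k2 s • v3 s + k2 s • D v3 s) := by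
    rw [hF2]
    rw [hDadd (fun s => -(k1 s) • T s) (fun s => k2 s • v3 s)
      (hk1s.neg.smul hTs) (hk2s.smul hv3s),
      hDsmul (fun s => -(k1 s)) T hk1s.neg hTs, hDsmul k2 v3 hk2s hv3s]
    funext s
    simp [deriv.neg]
  have key : ∀ s, D (D (D T)) s =
      (-(3 * k1 s * deriv k1 s)) • T s
      + (deriv (deriv k1) s - (k1 s)^3 - k1 s * (k2 s)^2) • v2 s
      + (2 * deriv k1 s * k2 s + k1 s * deriv k2 s) • v3 s := by
    intro s
    rw [e2, e3, e4, e5]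
    simp only [hF1, hF2, hF3]
    module
  have hk1' : ∀ s, deriv k1 s = 0 := by
    intro s
    have h := hC s
    rw [key s] at h
    have h2 := congrArg (fun v => (⟪T s, v⟫ : ℝ)) h
    simp only [inner_add_right, inner_neg_right, real_inner_smul_right, hTT, hTv2, hTv3,
      hLeg, mul_one, mul_zero, add_zero, zero_add] at h2
    have hk := hk1pos s
    nlinarith [h2]
  have hconst : ∀ s t, k1 s = k1 t :=
    fun s t => is_const_of_deriv_eq_zero (hk1s.differentiable (by simp)) hk1' s t
  have hk1'' : ∀ s, deriv (deriv k1) s = 0 := by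
    intro s
    have : deriv k1 = fun _ => (0:ℝ) := funext hk1'
    rw [this]; simp
  have hC2 : ∀ s, lam s • ξ s
      = ((k1 s)^3 + k1 s * (k2 s)^2) • v2 s + (-(k1 s * deriv k2 s)) • v3 s := by
    intro s
    rw [← hC s, key s, hk1' s, hk1'' s]
    module
  have ha : ∀ s, lam s * ⟪v2 s, ξ s⟫ = (k1 s)^3 + k1 s * (k2 s)^2 := by
    intro s
    have h2 := congrArg (fun v => (⟪v2 s, v⟫ : ℝ)) (hC2 s)
    simpa [inner_add_right, real_inner_smul_right, hv2v2, hv2v3, (by rw [← real_inner_self_eq_norm_sq]; exact hv2v2 s : ‖v2 s‖ ^ 2 = 1)] using h2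
  have hb : ∀ s, lam s * ⟪v3 s, ξ s⟫ = -(k1 s * deriv k2 s) := by
    intro s
    have h2 := congrArg (fun v => (⟪v3 s, v⟫ : ℝ)) (hC2 s)
    have h23 : (⟪v3 s, v2 s⟫ : ℝ) = 0 := by rw [real_inner_comm]; exact hv2v3 s
    simpa [inner_add_right, real_inner_smul_right, hv3v3, h23, (by rw [← real_inner_self_eq_norm_sq]; exact hv3v3 s : ‖v3 s‖ ^ 2 = 1)] using h2
  have hm : ∀ s, k1 s * ⟪v2 s, ξ s⟫ = ⟪T s, φ s (A s (T s))⟫ := by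
    intro s
    have hz : deriv (fun t => (⟪T t, ξ t⟫ : ℝ)) s = 0 := by
      have h0 : (fun t => (⟪T t, ξ t⟫ : ℝ)) = fun _ => 0 := funext hLeg
      rw [h0]; simp
    rw [hDmetric T ξ hTs hξs s] at hz
    have hF1s := congrFun hF1 s
    have hDξs := congrFun hDξ s
    rw [hF1s, hDξs] at hz
    have hφT : (⟪T s, φ s (T s)⟫ : ℝ) = 0 := by
      have h1 := hφa s (T s) (T s)
      have h2 := real_inner_comm (φ s (T s)) (T s)
      linarith
    simp only [real_inner_smul_left, inner_sub_right, inner_neg_right, hφT, neg_zero,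
      zero_sub, real_inner_comm (ξ s)] at hz
    have hrw : (⟪ξ s, k1 s • v2 s⟫ : ℝ) = k1 s * ⟪v2 s, ξ s⟫ := by
      rw [real_inner_smul_right, real_inner_comm]
    rw [hrw] at hz
    linarith [hz]
  have hmlam : ∀ s, lam s * ⟪T s, φ s (A s (T s))⟫ = (k1 s)^2 * ((k1 s)^2 + (k2 s)^2) := by
    intro s
    rw [← hm s]
    linear_combination k1 s * ha s
  have hmne : ∀ s, (⟪T s, φ s (A s (T s))⟫ : ℝ) ≠ 0 := by
    intro s hzero
    have h := hmlam s
    rw [hzero, mul_zero] at h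
    have h1 : 0 < (k1 s)^2 * ((k1 s)^2 + (k2 s)^2) :=
      mul_pos (pow_pos (hk1pos s) 2) (add_pos (pow_pos (hk1pos s) 2) (pow_pos (hk2pos s) 2))
    linarith
  refine ⟨hconst, ?_, ?_, ?_⟩
  · intro s
    have h := hmlam s
    rw [eq_div_iff (hmne s)]
    linear_combination hmlam s
  · intro s
    have hxi : ξ s = (((k1 s)^3 + k1 s * (k2 s)^2) / lam s) • v2 s
        + (-(k1 s * deriv k2 s) / lam s) • v3 s := by
      have h := hC2 s
      have h2 := congrArg (fun v => (lam s)⁻¹ • v) h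
      simp only [inv_smul_smul₀ (hlam s), smul_add, smul_smul] at h2
      rw [h2]
      congr 1 <;> rw [div_eq_inv_mul]
    rw [hxi]
    have hc1 : ((k1 s)^3 + k1 s * (k2 s)^2) / lam s = ⟪T s, φ s (A s (T s))⟫ / k1 s := by
      rw [div_eq_div_iff (hlam s) (hk1pos s).ne']
      linear_combination (-1 : ℝ) * hmlam s
    have hc2 : -(k1 s * deriv k2 s) / lam s = -(k1 s * deriv k2 s / lam s) := by ring
    rw [hc1, hc2, sub_eq_add_neg, neg_smul]
  · intro s
    have hxi : ξ s = (((k1 s)^3 + k1 s * (k2 s)^2) / lam s) • v2 s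
        + (-(k1 s * deriv k2 s) / lam s) • v3 s := by
      have h := hC2 s
      have h2 := congrArg (fun v => (lam s)⁻¹ • v) h
      simp only [inv_smul_smul₀ (hlam s), smul_add, smul_smul] at h2
      rw [h2]
      congr 1 <;> rw [div_eq_inv_mul]
    set a := ((k1 s)^3 + k1 s * (k2 s)^2) / lam s with hadef
    set b := -(k1 s * deriv k2 s) / lam s with hbdef
    have h23 : (⟪v3 s, v2 s⟫ : ℝ) = 0 := by rw [real_inner_comm]; exact hv2v3 s
    have hv2ξ : (⟪v2 s, ξ s⟫ : ℝ) = a := by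
      rw [hxi]; simp [inner_add_right, real_inner_smul_right, hv2v2, hv2v3, (by rw [← real_inner_self_eq_norm_sq]; exact hv2v2 s : ‖v2 s‖ ^ 2 = 1)]
    have hv3ξ : (⟪v3 s, ξ s⟫ : ℝ) = b := by
      rw [hxi]; simp [inner_add_right, real_inner_smul_right, hv3v3, h23, (by rw [← real_inner_self_eq_norm_sq]; exact hv3v3 s : ‖v3 s‖ ^ 2 = 1)]
    have hnorm : a^2 + b^2 = 1 := by
      have h := hξu s
      rw [hxi] at h
      simp only [inner_add_left, inner_add_right, real_inner_smul_left, real_inner_smul_right,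
        hv2v2, hv3v3, hv2v3, h23] at h
      nlinarith [h]
    rw [hv2ξ, hv3ξ]; exact hnorm
end

section
/- Let γ be a non-geodesic Legendre curve of osculating order r ≥ 4 in a non-Sasakian contact metric manifold with C-proper mean curvature vector field: ΔH = λξ, λ nowhere zero. Then k₁ is constant, λ = k₁²(k₁² + k₂²)/g(T, φhT), ξ = (g(T,φhT)/k₁) υ₂ - (k₁k₂′/λ) υ₃ - (k₁k₂k₃/λ) υ₄, and η(υ₂)² + η(υ₃)² + η(υ₄)² = 1. -/
open Real RealInnerProductSpace

theorem stmt_14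
    {E : Type*} [NormedAddCommGroup E] [InnerProductSpace ℝ E]
    (D : (ℝ → E) → (ℝ → E))
    (hDadd : ∀ V W : ℝ → E, ContDiff ℝ (⊤ : ℕ∞) V → ContDiff ℝ (⊤ : ℕ∞) W →
      D (fun s => V s + W s) = fun s => D V s + D W s)
    (hDsmul : ∀ (f : ℝ → ℝ) (V : ℝ → E), ContDiff ℝ (⊤ : ℕ∞) f → ContDiff ℝ (⊤ : ℕ∞) V →
      D (fun s => f s • V s) = fun s => deriv f s • V s + f s • D V s)
    (hDmetric : ∀ V W : ℝ → E, ContDiff ℝ (⊤ : ℕ∞) V → ContDiff ℝ (⊤ : ℕ∞) W → ∀ s : ℝ,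
      deriv (fun t => ⟪V t, W t⟫) s = ⟪D V s, W s⟫ + ⟪V s, D W s⟫)
    (hDsmooth : ∀ V : ℝ → E, ContDiff ℝ (⊤ : ℕ∞) V → ContDiff ℝ (⊤ : ℕ∞) (D V))
    (r : ℕ) (hr : 4 ≤ r)
    (υ : ℕ → ℝ → E) (k : ℕ → ℝ → ℝ)
    (hυs : ∀ i, ContDiff ℝ (⊤ : ℕ∞) (υ i)) (hks : ∀ i, ContDiff ℝ (⊤ : ℕ∞) (k i))
    (hortho : ∀ i j, 1 ≤ i → i ≤ r → 1 ≤ j → j ≤ r → ∀ s : ℝ,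
      ⟪υ i s, υ j s⟫ = if i = j then 1 else 0)
    (hkpos : ∀ i, 1 ≤ i → i + 1 ≤ r → ∀ s : ℝ, 0 < k i s)
    (hF1 : D (υ 1) = fun s => k 1 s • υ 2 s)
    (hFmid : ∀ i, 2 ≤ i → i < r →
      D (υ i) = fun s => -(k (i-1) s) • υ (i-1) s + k i s • υ (i+1) s)
    (hFlast : D (υ r) = fun s => -(k (r-1) s) • υ (r-1) s)
    (ξ : ℝ → E) (φ A : ℝ → E →ₗ[ℝ] E)
    (hξs : ContDiff ℝ (⊤ : ℕ∞) ξ)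
    (hξu : ∀ s : ℝ, ⟪ξ s, ξ s⟫ = 1)
    (hφa : ∀ (s : ℝ) (v w : E), ⟪φ s v, w⟫ = -⟪v, φ s w⟫)
    (hDξ : D ξ = fun s => -(φ s (υ 1 s)) - φ s (A s (υ 1 s)))
    (hLeg : ∀ s : ℝ, ⟪υ 1 s, ξ s⟫ = 0)
    (hNS : A ≠ 0)
    (lam : ℝ → ℝ) (hlam : ∀ s : ℝ, lam s ≠ 0)
    (hC : ∀ s : ℝ, -D (D (D (υ 1))) s = lam s • ξ s)
    :
    (∀ s t : ℝ, k 1 s = k 1 t) ∧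
      (∀ s : ℝ, lam s = (k 1 s)^2 * ((k 1 s)^2 + (k 2 s)^2)
        / ⟪υ 1 s, φ s (A s (υ 1 s))⟫) ∧
      (∀ s : ℝ, ξ s = (⟪υ 1 s, φ s (A s (υ 1 s))⟫ / k 1 s) • υ 2 s
        - (k 1 s * deriv (k 2) s / lam s) • υ 3 s
        - (k 1 s * k 2 s * k 3 s / lam s) • υ 4 s) ∧
      (∀ s : ℝ, ⟪υ 2 s, ξ s⟫^2 + ⟪υ 3 s, ξ s⟫^2 + ⟪υ 4 s, ξ s⟫^2 = 1) := by
  -- basic facts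
  have dk1 : Differentiable ℝ (k 1) := (hks 1).differentiable (by simp)
  have dk2 : Differentiable ℝ (k 2) := (hks 2).differentiable (by simp)
  have sdk1 : ContDiff ℝ (⊤ : ℕ∞) (deriv (k 1)) := (contDiff_infty_iff_deriv.mp (hks 1)).2
  have k1pos : ∀ s, 0 < k 1 s := hkpos 1 le_rfl (by omega)
  have k2pos : ∀ s, 0 < k 2 s := hkpos 2 (by omega) (by omega)
  have hF2 : D (υ 2) = fun s => -(k 1 s) • υ 1 s + k 2 s • υ 3 s := by
    simpa using hFmid 2 le_rfl (by omega)
  have hF3 : D (υ 3) = fun s => -(k 2 s) • υ 2 s + k 3 s • υ 4 s := by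
    simpa using hFmid 3 (by omega) (by omega)
  -- second derivative
  have h2 : D (D (υ 1)) = fun s =>
      (-(k 1 s * k 1 s)) • υ 1 s + (deriv (k 1) s • υ 2 s + (k 1 s * k 2 s) • υ 3 s) := by
    rw [hF1, hDsmul (k 1) (υ 2) (hks 1) (hυs 2)]
    funext s
    rw [congrFun hF2 s]
    module
  have sV1 : ContDiff ℝ (⊤ : ℕ∞) (fun s => (-(k 1 s * k 1 s)) • υ 1 s) :=
    (((hks 1).mul (hks 1)).neg).smul (hυs 1)
  have sV2 : ContDiff ℝ (⊤ : ℕ∞)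
      (fun s => deriv (k 1) s • υ 2 s + (k 1 s * k 2 s) • υ 3 s) :=
    (sdk1.smul (hυs 2)).add (((hks 1).mul (hks 2)).smul (hυs 3))
  have h3 : D (D (D (υ 1))) = fun s =>
      D (fun t => (-(k 1 t * k 1 t)) • υ 1 t) s
      + D (fun t => deriv (k 1) t • υ 2 t + (k 1 t * k 2 t) • υ 3 t) s := by
    rw [h2]; exact hDadd _ _ sV1 sV2
  have eA : D (fun t => (-(k 1 t * k 1 t)) • υ 1 t) = fun s =>
      deriv (fun t => -(k 1 t * k 1 t)) s • υ 1 s + (-(k 1 s * k 1 s)) • D (υ 1) s :=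
    hDsmul _ _ (((hks 1).mul (hks 1)).neg) (hυs 1)
  simp only [hF1] at eA
  have eB : D (fun t => deriv (k 1) t • υ 2 t + (k 1 t * k 2 t) • υ 3 t) = fun s =>
      D (fun t => deriv (k 1) t • υ 2 t) s + D (fun t => (k 1 t * k 2 t) • υ 3 t) s :=
    hDadd _ _ (sdk1.smul (hυs 2)) (((hks 1).mul (hks 2)).smul (hυs 3))
  have eB1 : D (fun t => deriv (k 1) t • υ 2 t) = fun s =>
      deriv (deriv (k 1)) s • υ 2 s + deriv (k 1) s • D (υ 2) s :=
    hDsmul _ _ sdk1 (hυs 2)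
  simp only [hF2] at eB1
  have eB2 : D (fun t => (k 1 t * k 2 t) • υ 3 t) = fun s =>
      deriv (fun t => k 1 t * k 2 t) s • υ 3 s + (k 1 s * k 2 s) • D (υ 3) s :=
    hDsmul _ _ ((hks 1).mul (hks 2)) (hυs 3)
  simp only [hF3] at eB2
  have dneg : ∀ s, deriv (fun t => -(k 1 t * k 1 t)) s
      = -(deriv (k 1) s * k 1 s + k 1 s * deriv (k 1) s) := fun s =>
    (((dk1 s).hasDerivAt.mul (dk1 s).hasDerivAt).neg).deriv
  have dmul : ∀ s, deriv (fun t => k 1 t * k 2 t) s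
      = deriv (k 1) s * k 2 s + k 1 s * deriv (k 2) s := fun s =>
    ((dk1 s).hasDerivAt.mul (dk2 s).hasDerivAt).deriv
  -- the key pointwise formula for ΔH = λ ξ
  have key : ∀ s, lam s • ξ s =
      (3 * k 1 s * deriv (k 1) s) • υ 1 s
      + ((k 1 s)^3 + k 1 s * (k 2 s)^2 - deriv (deriv (k 1)) s) • υ 2 s
      + (-(2 * deriv (k 1) s * k 2 s + k 1 s * deriv (k 2) s)) • υ 3 s
      + (-(k 1 s * k 2 s * k 3 s)) • υ 4 s := by
    intro s
    have h := hC s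
    rw [congrFun h3 s, congrFun eA s, congrFun eB s, congrFun eB1 s, congrFun eB2 s,
      dneg s, dmul s] at h
    rw [← h]
    module
  -- orthonormality shortcuts
  have o11 := hortho 1 1 (by omega) (by omega) (by omega) (by omega)
  have o12 := hortho 1 2 (by omega) (by omega) (by omega) (by omega)
  have o13 := hortho 1 3 (by omega) (by omega) (by omega) (by omega)
  have o14 := hortho 1 4 (by omega) (by omega) (by omega) (by omega)
  have o21 := hortho 2 1 (by omega) (by omega) (by omega) (by omega)
  have o22 := hortho 2 2 (by omega) (by omega) (by omega) (by omega)
  have o23 := hortho 2 3 (by omega) (by omega) (by omega) (by omega)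
  have o24 := hortho 2 4 (by omega) (by omega) (by omega) (by omega)
  have o31 := hortho 3 1 (by omega) (by omega) (by omega) (by omega)
  have o32 := hortho 3 2 (by omega) (by omega) (by omega) (by omega)
  have o33 := hortho 3 3 (by omega) (by omega) (by omega) (by omega)
  have o34 := hortho 3 4 (by omega) (by omega) (by omega) (by omega)
  have o41 := hortho 4 1 (by omega) (by omega) (by omega) (by omega)
  have o42 := hortho 4 2 (by omega) (by omega) (by omega) (by omega)
  have o43 := hortho 4 3 (by omega) (by omega) (by omega) (by omega)
  have o44 := hortho 4 4 (by omega) (by omega) (by omega) (by omega)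
  -- inner product of key with υ 1
  have E1 : ∀ s, lam s * ⟪υ 1 s, ξ s⟫ = 3 * k 1 s * deriv (k 1) s := by
    intro s
    have h := congrArg (fun v => (inner ℝ (υ 1 s) v : ℝ)) (key s)
    simp only [inner_add_right, real_inner_smul_right, o11, o12, o13, o14] at h
    norm_num at h
    linarith
  have hk1' : ∀ s, deriv (k 1) s = 0 := by
    intro s
    have h := E1 s
    rw [hLeg s, mul_zero] at h
    have h3 : (3 * k 1 s) * deriv (k 1) s = 0 := by linarith
    rcases mul_eq_zero.mp h3 with h4 | h4
    · have := k1pos s; linarith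
    · exact h4
  have hk1const : ∀ s t, k 1 s = k 1 t := is_const_of_deriv_eq_zero dk1 hk1'
  have hk1'' : ∀ s, deriv (deriv (k 1)) s = 0 := by
    intro s
    have h : deriv (k 1) = fun _ => (0:ℝ) := funext hk1'
    rw [h]
    exact deriv_const s 0
  have E2 : ∀ s, lam s * ⟪υ 2 s, ξ s⟫ = (k 1 s)^3 + k 1 s * (k 2 s)^2 := by
    intro s
    have h := congrArg (fun v => (inner ℝ (υ 2 s) v : ℝ)) (key s)
    simp only [inner_add_right, real_inner_smul_right, o21, o22, o23, o24, hk1', hk1''] at h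
    norm_num at h
    linarith
  have E3 : ∀ s, lam s * ⟪υ 3 s, ξ s⟫ = -(k 1 s * deriv (k 2) s) := by
    intro s
    have h := congrArg (fun v => (inner ℝ (υ 3 s) v : ℝ)) (key s)
    simp only [inner_add_right, real_inner_smul_right, o31, o32, o33, o34, hk1', hk1''] at h
    norm_num at h
    linarith
  have E4 : ∀ s, lam s * ⟪υ 4 s, ξ s⟫ = -(k 1 s * k 2 s * k 3 s) := by
    intro s
    have h := congrArg (fun v => (inner ℝ (υ 4 s) v : ℝ)) (key s)
    simp only [inner_add_right, real_inner_smul_right, o41, o42, o43, o44, hk1', hk1''] at h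
    norm_num at h
    linarith
  -- g(T, φ h T) = k₁ η(υ₂)
  have hGc : ∀ s, ⟪υ 1 s, φ s (A s (υ 1 s))⟫ = k 1 s * ⟪υ 2 s, ξ s⟫ := by
    intro s
    have hd : deriv (fun t => (⟪υ 1 t, ξ t⟫ : ℝ)) s = 0 := by
      have h : (fun t => (⟪υ 1 t, ξ t⟫ : ℝ)) = fun _ => 0 := funext hLeg
      rw [h]
      exact deriv_const s 0
    have hm := hDmetric (υ 1) ξ (hυs 1) hξs s
    rw [hd, congrFun hF1 s, congrFun hDξ s] at hm
    have hskew : ⟪υ 1 s, φ s (υ 1 s)⟫ = 0 := by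
      have h1 := hφa s (υ 1 s) (υ 1 s)
      have h2 := real_inner_comm (φ s (υ 1 s)) (υ 1 s)
      linarith
    simp only [inner_sub_right, inner_neg_right, real_inner_smul_left, hskew] at hm
    linarith
  have c2ne : ∀ s, ⟪υ 2 s, ξ s⟫ ≠ 0 := by
    intro s hc
    have h := E2 s
    rw [hc, mul_zero] at h
    have h1 := k1pos s
    have hpos : (0:ℝ) < (k 1 s)^3 + k 1 s * (k 2 s)^2 := by positivity
    linarith
  have hGne : ∀ s, ⟪υ 1 s, φ s (A s (υ 1 s))⟫ ≠ 0 := by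
    intro s
    rw [hGc s]
    exact mul_ne_zero (ne_of_gt (k1pos s)) (c2ne s)
  refine ⟨hk1const, ?_, ?_, ?_⟩
  · intro s
    rw [eq_div_iff (hGne s), hGc s]
    have h := E2 s
    linear_combination (k 1 s) * h
  · intro s
    have heq : lam s • ξ s = lam s •
        ((⟪υ 1 s, φ s (A s (υ 1 s))⟫ / k 1 s) • υ 2 s
          - (k 1 s * deriv (k 2) s / lam s) • υ 3 s
          - (k 1 s * k 2 s * k 3 s / lam s) • υ 4 s) := ?_
    · have h2 := congrArg (fun v => (lam s)⁻¹ • v) heq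
      simpa [inv_smul_smul₀ (hlam s)] using h2
    have s1 : lam s * (⟪υ 1 s, φ s (A s (υ 1 s))⟫ / k 1 s)
        = (k 1 s)^3 + k 1 s * (k 2 s)^2 := by
      rw [hGc s, mul_div_cancel_left₀ _ (ne_of_gt (k1pos s))]
      exact E2 s
    have s2 : lam s * (k 1 s * deriv (k 2) s / lam s) = k 1 s * deriv (k 2) s := by
      rw [mul_comm]
      exact div_mul_cancel₀ _ (hlam s)
    have s3 : lam s * (k 1 s * k 2 s * k 3 s / lam s) = k 1 s * k 2 s * k 3 s := by
      rw [mul_comm]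
      exact div_mul_cancel₀ _ (hlam s)
    have expand : lam s •
        ((⟪υ 1 s, φ s (A s (υ 1 s))⟫ / k 1 s) • υ 2 s
          - (k 1 s * deriv (k 2) s / lam s) • υ 3 s
          - (k 1 s * k 2 s * k 3 s / lam s) • υ 4 s)
        = (lam s * (⟪υ 1 s, φ s (A s (υ 1 s))⟫ / k 1 s)) • υ 2 s
          - (lam s * (k 1 s * deriv (k 2) s / lam s)) • υ 3 s
          - (lam s * (k 1 s * k 2 s * k 3 s / lam s)) • υ 4 s := by
      module
    rw [expand, s1, s2, s3, key s, hk1' s, hk1'' s]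
    module
  · intro s
    have h := congrArg (fun v => (inner ℝ v (ξ s) : ℝ)) (key s)
    simp only [inner_add_left, real_inner_smul_left, hξu, hLeg] at h
    have e2 := E2 s
    have e3 := E3 s
    have e4 := E4 s
    have hmain : lam s * (⟪υ 2 s, ξ s⟫^2 + ⟪υ 3 s, ξ s⟫^2 + ⟪υ 4 s, ξ s⟫^2) = lam s * 1 := by
      linear_combination (⟪υ 2 s, ξ s⟫ : ℝ) * e2 + (⟪υ 3 s, ξ s⟫ : ℝ) * e3
        + (⟪υ 4 s, ξ s⟫ : ℝ) * e4 - h + (⟪υ 2 s, ξ s⟫ : ℝ) * hk1'' s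
        + 2 * k 2 s * (⟪υ 3 s, ξ s⟫ : ℝ) * hk1' s
    have := mul_left_cancel₀ (hlam s) hmain
    linarith
end

section
/- Let E(2) carry the left-invariant contact metric structure with orthonormal frame X = e₁, φX = e₂, ξ = e₃ satisfying the connection relations ∇_{e₁}e₂ = ½(-c₂+2)e₃, ∇_{e₂}e₁ = -½(c₂+2)e₃, etc., and hX = -½c₂X, hφX = ½c₂φX. Let θ be a constant with sin θ cos θ < 0 and let γ be the unit-speed curve with tangent T = -cos θ X - sin θ φX. Then ∇_T T = -sin θ cos θ c₂ ξ, so γ is a Legendre circle with constant curvature k₁ = -sin θ cos θ c₂ > 0 and υ₂ = ξ, and moreover g(T, φhT) = -sin θ cos θ c₂ = k₁. -/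
open Real RealInnerProductSpace

theorem stmt_18
    {E : Type*} [NormedAddCommGroup E] [InnerProductSpace ℝ E]
    (c2 : ℝ) (hc2 : 0 < c2)
    (e1 e2 e3 : E)
    (h11 : ⟪e1, e1⟫ = 1) (h22 : ⟪e2, e2⟫ = 1) (h33 : ⟪e3, e3⟫ = 1)
    (h12 : ⟪e1, e2⟫ = 0) (h13 : ⟪e1, e3⟫ = 0) (h23 : ⟪e2, e3⟫ = 0)
    (nabla : E →ₗ[ℝ] E →ₗ[ℝ] E)
    (hn12 : nabla e1 e2 = ((-c2 + 2) / 2) • e3)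
    (hn21 : nabla e2 e1 = (-((c2 + 2) / 2)) • e3)
    (hn13 : nabla e1 e3 = (-((-c2 + 2) / 2)) • e2)
    (hn23 : nabla e2 e3 = ((c2 + 2) / 2) • e1)
    (hn31 : nabla e3 e1 = ((c2 - 2) / 2) • e2)
    (hn32 : nabla e3 e2 = (-((c2 - 2) / 2)) • e1)
    (hn11 : nabla e1 e1 = 0) (hn22 : nabla e2 e2 = 0) (hn33 : nabla e3 e3 = 0)
    (φ A : E →ₗ[ℝ] E)
    (hφ1 : φ e1 = e2) (hφ2 : φ e2 = -e1) (hφ3 : φ e3 = 0)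
    (hA1 : A e1 = (-(c2 / 2)) • e1) (hA2 : A e2 = (c2 / 2) • e2)
    (θ : ℝ) (hθ : Real.sin θ * Real.cos θ < 0)
    (T : E) (hT : T = (-Real.cos θ) • e1 + (-Real.sin θ) • e2) :
    nabla T T = (-(Real.sin θ * Real.cos θ * c2)) • e3 ∧
    ⟪T, e3⟫ = 0 ∧
    0 < -(Real.sin θ * Real.cos θ * c2) ∧
    ⟪T, φ (A T)⟫ = -(Real.sin θ * Real.cos θ * c2) := by
  subst hT
  refine ⟨?_, ?_, ?_, ?_⟩
  · simp only [map_add, map_smul, LinearMap.add_apply, LinearMap.smul_apply,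
      hn11, hn12, hn21, hn22, smul_zero, smul_smul]
    module
  · simp only [inner_add_left, real_inner_smul_left, h13, h23]
    ring
  · nlinarith
  · simp only [map_add, map_smul, hA1, hA2, hφ1, hφ2, smul_smul, smul_neg,
      inner_add_left, inner_add_right, real_inner_smul_left, real_inner_smul_right,
      inner_neg_right, h11, h22, h12, real_inner_comm e2 e1]
    ring_nf
    rw [show (inner ℝ e2 e1 : ℝ) = 0 from by rw [real_inner_comm]; exact h12]
    ring
end

section
/- In E(2) with the left-invariant contact metric structure as above, let θ be a constant with sin θ cos θ < 0 and let γ be a unit-speed curve with T = cos θ X + sin θ φX, υ₂ = ξ, and υ₃ = sin θ e₁ - cos θ e₂. Then γ is a Legendre helix of osculating order 3 with constant curvatures k₁ = -cos θ sin θ c₂ and k₂ = ½(cos²θ(-c₂+2) + sin²θ(c₂+2)); in particular ∇_T υ₃ = -k₂ ξ. -/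
open Real RealInnerProductSpace

/- The velocity `T = cos θ e₁ + sin θ e₂` and `υ₃` are constant combinations of the frame, so
every covariant derivative along the curve is read off the connection table on the frame.
Since `∇_{e₁}e₁ = ∇_{e₂}e₂ = 0`, in `∇_T T` and `∇_T υ₃` only the mixed terms survive, giving
multiples of `ξ`; `∇_T ξ` splits along `T` and `υ₃` once `sin² θ + cos² θ = 1` is used. -/

theorem LinearMap.apply_smul_add_smul_of_apply_self_eq_zero {R M N : Type*} [CommSemiring R]
    [AddCommMonoid M] [AddCommMonoid N] [Module R M] [Module R N]
    (B : M →ₗ[R] M →ₗ[R] N) {x y : M} (hx : B x x = 0) (hy : B y y = 0) (a b c d : R) :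
    B (a • x + b • y) (c • x + d • y) = (a * d) • B x y + (b * c) • B y x := by
  simp only [map_add, map_smul, LinearMap.add_apply, LinearMap.smul_apply, hx, hy, smul_zero,
    zero_add, add_zero, smul_smul]
  rw [add_comm, mul_comm c, mul_comm d]

theorem stmt_19_general
    {E : Type*} [NormedAddCommGroup E] [InnerProductSpace ℝ E]
    (c2 : ℝ) (hc2 : 0 < c2)
    (e1 e2 e3 : E)
    (h13 : ⟪e1, e3⟫ = 0) (h23 : ⟪e2, e3⟫ = 0)
    (nabla : E →ₗ[ℝ] E →ₗ[ℝ] E)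
    (hn12 : nabla e1 e2 = ((-c2 + 2) / 2) • e3)
    (hn21 : nabla e2 e1 = (-((c2 + 2) / 2)) • e3)
    (hn13 : nabla e1 e3 = (-((-c2 + 2) / 2)) • e2)
    (hn23 : nabla e2 e3 = ((c2 + 2) / 2) • e1)
    (hn11 : nabla e1 e1 = 0) (hn22 : nabla e2 e2 = 0)
    (θ : ℝ) (hθ : Real.sin θ * Real.cos θ < 0)
    (T v3 : E)
    (hT : T = Real.cos θ • e1 + Real.sin θ • e2)
    (hv3 : v3 = Real.sin θ • e1 + (-Real.cos θ) • e2)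
    (k1 k2 : ℝ)
    (hk1 : k1 = -(Real.cos θ * Real.sin θ * c2))
    (hk2 : k2 = ((Real.cos θ)^2 * (-c2 + 2) + (Real.sin θ)^2 * (c2 + 2)) / 2) :
    ⟪T, e3⟫ = 0 ∧
    0 < k1 ∧
    nabla T T = k1 • e3 ∧
    nabla T e3 = (-k1) • T + k2 • v3 ∧
    nabla T v3 = (-k2) • e3 := by
  have pythagoras := Real.sin_sq_add_cos_sq θ
  have hmixed := nabla.apply_smul_add_smul_of_apply_self_eq_zero hn11 hn22
  refine ⟨?legendre, ?k1_pos, ?_, ?_, ?_⟩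
  case legendre =>
    simp only [hT, inner_add_left, real_inner_smul_left, h13, h23, mul_zero, add_zero]
  case k1_pos =>
    rw [hk1, neg_pos, mul_comm (Real.cos θ)]
    exact mul_neg_of_neg_of_pos hθ hc2
  · rw [hT, hmixed, hn12, hn21, hk1]
    match_scalars
    ring
  · rw [hT, hv3, hk1, hk2]
    simp only [map_add, map_smul, LinearMap.add_apply, LinearMap.smul_apply, hn13, hn23]
    match_scalars
    · linear_combination (Real.cos θ * (-c2 + 2) / 2) * pythagoras
    · linear_combination (-(Real.sin θ) * (c2 + 2) / 2) * pythagoras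
  · rw [hT, hv3, hmixed, hn12, hn21, hk2]
    match_scalars
    ring

theorem stmt_19
    {E : Type*} [NormedAddCommGroup E] [InnerProductSpace ℝ E]
    (c2 : ℝ) (hc2 : 0 < c2)
    (e1 e2 e3 : E)
    (h11 : ⟪e1, e1⟫ = 1) (h22 : ⟪e2, e2⟫ = 1) (h33 : ⟪e3, e3⟫ = 1)
    (h12 : ⟪e1, e2⟫ = 0) (h13 : ⟪e1, e3⟫ = 0) (h23 : ⟪e2, e3⟫ = 0)
    (nabla : E →ₗ[ℝ] E →ₗ[ℝ] E)
    (hn12 : nabla e1 e2 = ((-c2 + 2) / 2) • e3)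
    (hn21 : nabla e2 e1 = (-((c2 + 2) / 2)) • e3)
    (hn13 : nabla e1 e3 = (-((-c2 + 2) / 2)) • e2)
    (hn23 : nabla e2 e3 = ((c2 + 2) / 2) • e1)
    (hn31 : nabla e3 e1 = ((c2 - 2) / 2) • e2)
    (hn32 : nabla e3 e2 = (-((c2 - 2) / 2)) • e1)
    (hn11 : nabla e1 e1 = 0) (hn22 : nabla e2 e2 = 0) (hn33 : nabla e3 e3 = 0)
    (θ : ℝ) (hθ : Real.sin θ * Real.cos θ < 0)
    (T v3 : E)
    (hT : T = Real.cos θ • e1 + Real.sin θ • e2)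
    (hv3 : v3 = Real.sin θ • e1 + (-Real.cos θ) • e2)
    (k1 k2 : ℝ)
    (hk1 : k1 = -(Real.cos θ * Real.sin θ * c2))
    (hk2 : k2 = ((Real.cos θ)^2 * (-c2 + 2) + (Real.sin θ)^2 * (c2 + 2)) / 2) :
    ⟪T, e3⟫ = 0 ∧
    0 < k1 ∧
    nabla T T = k1 • e3 ∧
    nabla T e3 = (-k1) • T + k2 • v3 ∧
    nabla T v3 = (-k2) • e3 :=
  stmt_19_general c2 hc2 e1 e2 e3 h13 h23 nabla hn12 hn21 hn13 hn23 hn11 hn22 θ hθ T v3 hT hv3 k1 k2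
    hk1 hk2
end
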